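/- arXiv:2601.01607 — 3 statements merged into one kernel-verified Lean document; each statement's English description precedes it below -/
import Mathlib

section
/- For every nonempty compact set of possible allocations Γ ⊆ ℝ_+^k and every random valuation X with values in ℝ_+^k that has finite expectation (E[‖X‖] < ∞), there exists an IC and IR Γ-mechanism μ = (q,s) attaining the optimal revenue, i.e., E[s(X)] = Rev_Γ(X) = sup over all IC and IR Γ-mechanisms μ' = (q',s') of E[s'(X)]. -/
/-!
Take a sequence of IC, IR mechanisms whose revenues tend to the supremum, normalised so that
`s 0 = 0`. IC says exactly that `qₙ(y)` is a subgradient (relative to the orthant) of the buyer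
payoff `uₙ = qₙ·x − sₙ` at `y`, so the `uₙ` are uniformly Lipschitz with `uₙ 0 = 0`, and a
subsequence converges pointwise to some `U`. Letting `q x` maximise `g·x` over the limiting
subgradients `g ∈ Γ` of `U` at `x` and `s = q·x − U` gives an IC, IR mechanism with
`limsup sₙ ≤ s` pointwise. All payments are dominated by `L‖x‖` (`L` bounds `Γ`), so the
reverse Fatou lemma shows that the revenue of `(q, s)` is at least the supremum.
-/

open MeasureTheory Filter

noncomputable section

abbrev E (k : ℕ) := EuclideanSpace ℝ (Fin k)

def orthant (k : ℕ) : Set (E k) := {x | ∀ i, 0 ≤ x i}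

/-- The dot product `g · x` on `ℝ^k`. -/
def dotp {k : ℕ} (g x : E k) : ℝ := ∑ i, g i * x i

def IsAlloc {k : ℕ} (Γ : Set (E k)) (q : E k → E k) : Prop :=
  ∀ x ∈ orthant k, q x ∈ Γ

def IsIC {k : ℕ} (q : E k → E k) (s : E k → ℝ) : Prop :=
  ∀ x ∈ orthant k, ∀ y ∈ orthant k, dotp (q x) x - s x ≥ dotp (q y) x - s y

def IsIR {k : ℕ} (q : E k → E k) (s : E k → ℝ) : Prop :=
  ∀ x ∈ orthant k, 0 ≤ dotp (q x) x - s x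

def IsNPT {k : ℕ} (s : E k → ℝ) : Prop :=
  ∀ x ∈ orthant k, 0 ≤ s x

/-- The set of subgradients of `f` at `x`. -/
def Subgrad {k : ℕ} (f : E k → ℝ) (x : E k) : Set (E k) :=
  {g | ∀ y, f y - f x ≥ dotp g (y - x)}

/-- `b ∈ B_Γ`: convex on `ℝ^k`, `b 0 = 0`, and a subgradient in `Γ` at every point. -/
def BClass {k : ℕ} (Γ : Set (E k)) (b : E k → ℝ) : Prop :=
  ConvexOn ℝ Set.univ b ∧ b 0 = 0 ∧ ∀ x, (Subgrad b x ∩ Γ).Nonempty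

/-- One-sided directional derivative `f′(x;y) = lim_{δ→0⁺} (f(x+δy)-f(x))/δ`. -/
def dirDeriv {k : ℕ} (b : E k → ℝ) (x y : E k) : ℝ :=
  limUnder (nhdsWithin (0:ℝ) (Set.Ioi 0)) fun δ => (b (x + δ • y) - b x) / δ

/-- The extended buyer payoff function `b(x) = sup_{z ∈ ℝ₊^k} [q(z)·x − s(z)]`. -/
def extPayoff {k : ℕ} (q : E k → E k) (s : E k → ℝ) (x : E k) : ℝ :=
  sSup ((fun z => dotp (q z) x - s z) '' orthant k)

def SellerFavorable {k : ℕ} (q : E k → E k) (s : E k → ℝ) : Prop :=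
  ∀ x ∈ orthant k, s x = dirDeriv (extPayoff q s) x x - extPayoff q s x

open Topology
open scoped NNReal

section Dotp

variable {k : ℕ}

lemma dotp_eq_inner (g x : E k) : dotp g x = inner ℝ g x := by
  simp [dotp, PiLp.inner_apply, RCLike.inner_apply, mul_comm]

lemma dotp_sub_right (g x y : E k) : dotp g (x - y) = dotp g x - dotp g y := by
  simp [dotp_eq_inner, inner_sub_right]

@[simp]
lemma dotp_zero_right (g : E k) : dotp g 0 = 0 := by
  simp [dotp]

lemma abs_dotp_le (g x : E k) : |dotp g x| ≤ ‖g‖ * ‖x‖ := by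
  rw [dotp_eq_inner]
  exact abs_real_inner_le_norm g x

lemma dotp_nonneg {g x : E k} (hg : g ∈ orthant k) (hx : x ∈ orthant k) : 0 ≤ dotp g x :=
  Finset.sum_nonneg fun i _ => mul_nonneg (hg i) (hx i)

@[fun_prop]
lemma Continuous.dotp {α : Type*} [TopologicalSpace α] {f g : α → E k} (hf : Continuous f)
    (hg : Continuous g) : Continuous fun a => _root_.dotp (f a) (g a) := by
  simp only [dotp_eq_inner]
  exact hf.inner hg

end Dotp

section Orthant

variable {k : ℕ}

lemma zero_mem_orthant : (0 : E k) ∈ orthant k := fun _ => le_rfl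

def orthantProj (x : E k) : E k := WithLp.toLp 2 fun i => max (x i) 0

lemma orthantProj_mem (x : E k) : orthantProj x ∈ orthant k := fun _ => le_max_right _ _

lemma orthantProj_of_mem {x : E k} (hx : x ∈ orthant k) : orthantProj x = x := by
  ext i
  exact max_eq_left (hx i)

lemma lipschitzWith_orthantProj : LipschitzWith 1 (orthantProj (k := k)) := by
  refine LipschitzWith.of_dist_le_mul fun x y => ?_
  rw [NNReal.coe_one, one_mul, EuclideanSpace.dist_eq, EuclideanSpace.dist_eq]
  gcongr with i
  simp only [Real.dist_eq]
  exact abs_max_sub_max_le_abs _ _ _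

@[fun_prop]
lemma continuous_orthantProj : Continuous (orthantProj (k := k)) :=
  lipschitzWith_orthantProj.continuous

end Orthant

section Extraction

variable {α β : Type*} [PseudoMetricSpace α] [PseudoMetricSpace β]

lemma cauchySeq_apply_of_denseRange {f : ℕ → α → β} {K : ℝ≥0}
    (hf : ∀ n, LipschitzWith K (f n)) {D : ℕ → α} (hD : DenseRange D)
    (hc : ∀ m, CauchySeq fun n => f n (D m)) (x : α) : CauchySeq fun n => f n x := by
  rw [Metric.cauchySeq_iff']
  intro ε hε
  obtain ⟨δ, hδ, hKδ⟩ := exists_pos_mul_lt (show 0 < ε / 3 by positivity) K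
  obtain ⟨m, hm⟩ := hD.exists_dist_lt x hδ
  obtain ⟨N, hN⟩ := Metric.cauchySeq_iff'.1 (hc m) (ε / 3) (by positivity)
  have hclose : ∀ n, dist (f n x) (f n (D m)) < ε / 3 := fun n =>
    ((hf n).dist_le_mul x (D m)).trans_lt
      ((mul_le_mul_of_nonneg_left hm.le K.coe_nonneg).trans_lt hKδ)
  refine ⟨N, fun n hn => ?_⟩
  calc dist (f n x) (f N x)
      ≤ dist (f n x) (f n (D m)) + dist (f n (D m)) (f N (D m)) + dist (f N (D m)) (f N x) :=
        dist_triangle4 _ _ _ _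
    _ < ε / 3 + ε / 3 + ε / 3 := by
        gcongr
        · exact hclose n
        · exact hN n hn
        · rw [dist_comm]; exact hclose N
    _ = ε := by ring

/-- A sequential Arzelà–Ascoli theorem for pointwise convergence. -/
theorem exists_subseq_tendsto_of_lipschitzWith [TopologicalSpace.SeparableSpace α] [Nonempty α]
    {f : ℕ → α → ℝ} {K : ℝ≥0} (hf : ∀ n, LipschitzWith K (f n))
    (hb : ∀ x, ∃ C, ∀ n, |f n x| ≤ C) :
    ∃ φ : ℕ → ℕ, StrictMono φ ∧ ∃ F : α → ℝ, LipschitzWith K F ∧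
      ∀ x, Tendsto (fun j => f (φ j) x) atTop (𝓝 (F x)) := by
  obtain ⟨D, hD⟩ := TopologicalSpace.exists_dense_seq α
  choose C hC using fun m => hb (D m)
  obtain ⟨_, -, φ, hφ, hφD⟩ :=
    (isCompact_univ_pi fun m => isCompact_Icc (a := -C m) (b := C m)).tendsto_subseq
      (x := fun n m => f n (D m)) fun n => Set.mem_univ_pi.2 fun m => abs_le.1 (hC m n)
  have hcauchy := cauchySeq_apply_of_denseRange (fun j => hf (φ j)) hD
    fun m => (tendsto_pi_nhds.1 hφD m).cauchySeq
  choose F hF using fun x => cauchySeq_tendsto_of_complete (hcauchy x)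
  exact ⟨φ, hφ, F, (isClosed_setOfPred_lipschitzWith K).mem_of_tendsto (tendsto_pi_nhds.2 hF)
    (Eventually.of_forall fun j => hf (φ j)), hF⟩

lemma eventually_lt_of_forall_tendsto_subseq {X : Type*} [TopologicalSpace X]
    [FirstCountableTopology X] {K : Set X} (hK : IsCompact K) {x : ℕ → X} (hx : ∀ n, x n ∈ K)
    {f : X → ℝ} (hf : Continuous f) {c : ℝ}
    (h : ∀ a, ∀ ψ : ℕ → ℕ, StrictMono ψ → Tendsto (x ∘ ψ) atTop (𝓝 a) → f a < c) :
    ∀ᶠ n in atTop, f (x n) < c := by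
  by_contra hne
  simp only [not_eventually, not_lt] at hne
  obtain ⟨a, ha, ψ, hψ, hlim⟩ := (hK.inter_right (isClosed_le continuous_const hf)).tendsto_subseq'
    (hne.mono fun n hn => ⟨hx n, hn⟩)
  exact (h a ψ hψ hlim).not_ge ha.2

end Extraction

/-- Reverse Fatou lemma. -/
theorem le_integral_of_tendsto_integral {α : Type*} [MeasurableSpace α] {μ : Measure α}
    {f : ℕ → α → ℝ} {F g : α → ℝ} {r : ℝ} (hf : ∀ n, Integrable (f n) μ) (hF : Integrable F μ)
    (hg : Integrable g μ) (hfg : ∀ n, ∀ᵐ a ∂μ, f n a ≤ g a) (hFg : ∀ᵐ a ∂μ, F a ≤ g a)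
    (hlim : ∀ᵐ a ∂μ, ∀ c, F a < c → ∀ᶠ n in atTop, f n a < c)
    (hr : Tendsto (fun n => ∫ a, f n a ∂μ) atTop (𝓝 r)) : r ≤ ∫ a, F a ∂μ := by
  have hgf : ∀ n, 0 ≤ᵐ[μ] fun a => g a - f n a := fun n =>
    (hfg n).mono fun a h => sub_nonneg.2 h
  have hpointwise : ∀ᵐ a ∂μ, ENNReal.ofReal (g a - F a) ≤
      liminf (fun n => ENNReal.ofReal (g a - f n a)) atTop := by
    filter_upwards [hlim] with a ha
    refine (le_liminf_iff (u := fun n => ENNReal.ofReal (g a - f n a))).2 fun b hb => ?_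
    have hb_top : b ≠ ⊤ := ne_top_of_lt hb
    rw [ENNReal.lt_ofReal_iff_toReal_lt hb_top] at hb
    filter_upwards [ha (g a - b.toReal) (by linarith)] with n hn
    rw [ENNReal.lt_ofReal_iff_toReal_lt hb_top]
    linarith
  have key : ENNReal.ofReal (∫ a, g a - F a ∂μ) ≤ ENNReal.ofReal (∫ a, g a ∂μ - r) :=
    calc ENNReal.ofReal (∫ a, g a - F a ∂μ) = ∫⁻ a, ENNReal.ofReal (g a - F a) ∂μ :=
          ofReal_integral_eq_lintegral_ofReal (hg.sub hF) (hFg.mono fun a h => sub_nonneg.2 h)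
      _ ≤ ∫⁻ a, liminf (fun n => ENNReal.ofReal (g a - f n a)) atTop ∂μ :=
          lintegral_mono_ae hpointwise
      _ ≤ liminf (fun n => ∫⁻ a, ENNReal.ofReal (g a - f n a) ∂μ) atTop :=
          lintegral_liminf_le' fun n => (hg.sub (hf n)).aemeasurable.ennreal_ofReal
      _ = liminf (fun n => ENNReal.ofReal (∫ a, g a ∂μ - ∫ a, f n a ∂μ)) atTop := by
          congr 1
          funext n
          rw [← integral_sub hg (hf n)]
          exact (ofReal_integral_eq_lintegral_ofReal (hg.sub (hf n)) (hgf n)).symm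
      _ = ENNReal.ofReal (∫ a, g a ∂μ - r) :=
          ((ENNReal.continuous_ofReal.tendsto _).comp (tendsto_const_nhds.sub hr)).liminf_eq
  have hr_le : r ≤ ∫ a, g a ∂μ :=
    le_of_tendsto' hr fun n => integral_mono_ae (hf n) hg (hfg n)
  rw [ENNReal.ofReal_le_ofReal_iff (sub_nonneg.2 hr_le), integral_sub hg hF] at key
  linarith

section Mechanism

variable {k : ℕ} {Γ : Set (E k)} {L : ℝ} {q : E k → E k} {s : E k → ℝ}

def payoff (q : E k → E k) (s : E k → ℝ) (x : E k) : ℝ := dotp (q x) x - s x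

def orthantSubgrad (u : E k → ℝ) (z : E k) : Set (E k) :=
  {g | ∀ y ∈ orthant k, dotp g (y - z) ≤ u y - u z}

lemma abs_dotp_le_of_mem (hL : ∀ g ∈ Γ, ‖g‖ ≤ L) {g : E k} (hg : g ∈ Γ) (x : E k) :
    |dotp g x| ≤ L * ‖x‖ :=
  (abs_dotp_le g x).trans (mul_le_mul_of_nonneg_right (hL g hg) (norm_nonneg x))

lemma IsIC.mem_orthantSubgrad (h : IsIC q s) {y : E k} (hy : y ∈ orthant k) :
    q y ∈ orthantSubgrad (payoff q s) y := fun x hx => by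
  have := h x hx y hy
  rw [dotp_sub_right]
  simp only [payoff]
  linarith

lemma IsIC.apply_zero_le (h : IsIC q s) {x : E k} (hx : x ∈ orthant k) : s 0 ≤ s x := by
  simpa using h 0 zero_mem_orthant x hx

lemma IsIC.sub_const (h : IsIC q s) (c : ℝ) : IsIC q fun x => s x - c := fun x hx y hy => by
  linarith [h x hx y hy]

lemma IsIC.isIR_sub_apply_zero (h : IsIC q s) (hq : IsAlloc Γ q) (hΓ : Γ ⊆ orthant k) :
    IsIR q fun x => s x - s 0 := fun x hx => by
  linarith [h x hx 0 zero_mem_orthant, dotp_nonneg (hΓ (hq 0 zero_mem_orthant)) hx]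

lemma IsIR.apply_le (h : IsIR q s) (hq : IsAlloc Γ q) (hL : ∀ g ∈ Γ, ‖g‖ ≤ L) {x : E k}
    (hx : x ∈ orthant k) : s x ≤ L * ‖x‖ := by
  linarith [h x hx, le_abs_self (dotp (q x) x), abs_dotp_le_of_mem hL (hq x hx) x]

lemma lipschitzOnWith_of_nonempty_orthantSubgrad {L : ℝ≥0} (hL : ∀ g ∈ Γ, ‖g‖ ≤ L) {u : E k → ℝ}
    (hu : ∀ z ∈ orthant k, (Γ ∩ orthantSubgrad u z).Nonempty) :
    LipschitzOnWith L u (orthant k) := by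
  refine LipschitzOnWith.of_dist_le_mul fun x hx y hy => ?_
  obtain ⟨g, hgΓ, hg⟩ := hu y hy
  obtain ⟨g', hg'Γ, hg'⟩ := hu x hx
  have h₁ := neg_le_of_abs_le (abs_dotp_le_of_mem hL hgΓ (x - y))
  have h₂ := neg_le_of_abs_le (abs_dotp_le_of_mem hL hg'Γ (y - x))
  rw [norm_sub_rev] at h₂
  rw [Real.dist_eq, dist_eq_norm, abs_le]
  constructor <;> linarith [hg x hx, hg' y hy]

lemma exists_isAlloc_isIC_isIR_zero (hΓne : Γ.Nonempty) (hΓ : Γ ⊆ orthant k) :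
    ∃ q : E k → E k, IsAlloc Γ q ∧ IsIC q 0 ∧ IsIR q 0 := by
  obtain ⟨g, hg⟩ := hΓne
  exact ⟨fun _ => g, fun _ _ => hg, fun _ _ _ _ => le_rfl,
    fun x hx => by simpa using dotp_nonneg (hΓ hg) hx⟩

end Mechanism

section Subgradients

variable {k : ℕ} {Γ : Set (E k)}

lemma mem_orthantSubgrad_of_tendsto {ι : Type*} {l : Filter ι} [l.NeBot] {u : ι → E k → ℝ}
    {U : E k → ℝ} {gs : ι → E k} {g z : E k} (hz : z ∈ orthant k)
    (hu : ∀ y ∈ orthant k, Tendsto (fun i => u i y) l (𝓝 (U y)))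
    (hgs : ∀ i, gs i ∈ orthantSubgrad (u i) z) (hg : Tendsto gs l (𝓝 g)) :
    g ∈ orthantSubgrad U z := fun y hy =>
  le_of_tendsto_of_tendsto' (((continuous_id.dotp continuous_const).tendsto g).comp hg)
    ((hu y hy).sub (hu z hz)) fun i => hgs i y hy

lemma isClosed_setOf_mem_orthantSubgrad (hΓ : IsClosed Γ) {U : E k → ℝ} (hU : Continuous U) :
    IsClosed {p : E k × E k | p.2 ∈ Γ ∩ orthantSubgrad U (orthantProj p.1)} := by
  have hset : {p : E k × E k | p.2 ∈ Γ ∩ orthantSubgrad U (orthantProj p.1)} =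
      Prod.snd ⁻¹' Γ ∩ ⋂ y ∈ orthant k,
        {p | dotp p.2 (y - orthantProj p.1) ≤ U y - U (orthantProj p.1)} := by
    ext
    simp [orthantSubgrad]
  rw [hset]
  exact (hΓ.preimage continuous_snd).inter <|
    isClosed_biInter fun y _ => isClosed_le (by fun_prop) (by fun_prop)

/-- Measurability holds because `x ↦ max_{g ∈ G x} g·x` is upper semicontinuous. -/
lemma exists_measurable_argmax_dotp (hΓc : IsCompact Γ) {G : E k → Set (E k)}
    (hGΓ : ∀ x, G x ⊆ Γ) (hG : ∀ x, (G x).Nonempty)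
    (hgraph : IsClosed {p : E k × E k | p.2 ∈ G p.1}) :
    ∃ q : E k → E k, (∀ x, q x ∈ G x ∧ ∀ g ∈ G x, dotp g x ≤ dotp (q x) x) ∧
      Measurable fun x => dotp (q x) x := by
  have hGc : ∀ x, IsCompact (G x) := fun x =>
    hΓc.of_isClosed_subset (hgraph.preimage (by fun_prop : Continuous fun g => (x, g))) (hGΓ x)
  choose q hqG hqmax using fun x =>
    (hGc x).exists_isMaxOn (hG x) (continuous_id.dotp continuous_const).continuousOn
  refine ⟨q, fun x => ⟨hqG x, fun g hg => hqmax x hg⟩, ?_⟩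
  refine UpperSemicontinuous.measurable <| upperSemicontinuous_iff_isClosed_preimage.2
    fun r => IsSeqClosed.isClosed fun xs x hxs hx => ?_
  obtain ⟨g, -, ψ, hψ, hg⟩ := hΓc.tendsto_subseq fun n => hGΓ _ (hqG (xs n))
  have hxψ := hx.comp hψ.tendsto_atTop
  have hgx : g ∈ G x := hgraph.mem_of_tendsto (hxψ.prodMk_nhds hg)
    (Eventually.of_forall fun n => hqG (xs (ψ n)))
  have hr : r ≤ dotp g x := ge_of_tendsto ((continuous_fst.dotp continuous_snd).tendsto (g, x)
    |>.comp (hg.prodMk_nhds hxψ)) (Eventually.of_forall fun n => hxs (ψ n))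
  exact hr.trans (hqmax x hgx)

end Subgradients

section LimitMechanism

variable {k : ℕ} {Γ : Set (E k)} {qN : ℕ → E k → E k} {sN : ℕ → E k → ℝ}

lemma exists_subseq_tendsto_payoff {L : ℝ≥0} (hL : ∀ g ∈ Γ, ‖g‖ ≤ L)
    (hq : ∀ n, IsAlloc Γ (qN n)) (hIC : ∀ n, IsIC (qN n) (sN n)) (hs0 : ∀ n, sN n 0 = 0) :
    ∃ φ : ℕ → ℕ, StrictMono φ ∧ ∃ U : E k → ℝ, LipschitzWith L U ∧
      ∀ x ∈ orthant k, Tendsto (fun j => payoff (qN (φ j)) (sN (φ j)) x) atTop (𝓝 (U x)) := by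
  have hlip : ∀ n, LipschitzWith L (payoff (qN n) (sN n) ∘ orthantProj) := fun n => by
    have h := (lipschitzOnWith_of_nonempty_orthantSubgrad hL fun z hz =>
      ⟨qN n z, hq n z hz, (hIC n).mem_orthantSubgrad hz⟩).comp
        (lipschitzWith_orthantProj.lipschitzOnWith (s := Set.univ)) fun x _ => orthantProj_mem x
    simpa [lipschitzOnWith_univ] using h
  have hzero : ∀ n, payoff (qN n) (sN n) (orthantProj 0) = 0 := fun n => by
    simp [payoff, orthantProj_of_mem zero_mem_orthant, hs0]
  obtain ⟨φ, hφ, U, hU, hlim⟩ := exists_subseq_tendsto_of_lipschitzWith hlip fun x =>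
    ⟨L * ‖x‖, fun n => by simpa [hzero n, Real.dist_eq] using (hlip n).dist_le_mul x 0⟩
  exact ⟨φ, hφ, U, hU, fun x hx => by simpa [orthantProj_of_mem hx] using hlim x⟩

/-- The limit mechanism: `U` is a pointwise limit of the payoffs and `q x` maximises `g·x` over
the limiting subgradients `g` at `x`; this choice of `q` makes `limsup sₙ ≤ s`. -/
theorem exists_limit_mechanism (hΓc : IsCompact Γ) (hq : ∀ n, IsAlloc Γ (qN n))
    (hIC : ∀ n, IsIC (qN n) (sN n)) (hIR : ∀ n, IsIR (qN n) (sN n)) (hs0 : ∀ n, sN n 0 = 0) :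
    ∃ φ : ℕ → ℕ, StrictMono φ ∧ ∃ q : E k → E k, ∃ s : E k → ℝ,
      IsAlloc Γ q ∧ IsIC q s ∧ IsIR q s ∧ s 0 = 0 ∧ Measurable s ∧
      ∀ x ∈ orthant k, ∀ c, s x < c → ∀ᶠ j in atTop, sN (φ j) x < c := by
  obtain ⟨L, hL⟩ : ∃ L : ℝ≥0, ∀ g ∈ Γ, ‖g‖ ≤ L :=
    let ⟨R, hR, h⟩ := hΓc.isBounded.exists_pos_norm_le
    ⟨⟨R, hR.le⟩, h⟩
  obtain ⟨φ, hφ, U, hU, hlim⟩ := exists_subseq_tendsto_payoff hL hq hIC hs0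
  have hsubseq : ∀ {z}, z ∈ orthant k → ∀ {ψ : ℕ → ℕ}, StrictMono ψ → ∀ {g},
      Tendsto (fun i => qN (φ (ψ i)) z) atTop (𝓝 g) → g ∈ Γ ∩ orthantSubgrad U z :=
    fun hz ψ hψ g hg =>
      ⟨hΓc.isClosed.mem_of_tendsto hg (Eventually.of_forall fun i => hq _ _ hz),
        mem_orthantSubgrad_of_tendsto hz (fun y hy => (hlim y hy).comp hψ.tendsto_atTop)
          (fun i => (hIC _).mem_orthantSubgrad hz) hg⟩
  have hne : ∀ x, (Γ ∩ orthantSubgrad U (orthantProj x)).Nonempty := fun x =>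
    let ⟨g, _, ψ, hψ, hg⟩ := hΓc.tendsto_subseq fun n => hq (φ n) _ (orthantProj_mem x)
    ⟨g, hsubseq (orthantProj_mem x) hψ hg⟩
  obtain ⟨q, hqG, hM⟩ := exists_measurable_argmax_dotp hΓc (fun _ => Set.inter_subset_left) hne
    (isClosed_setOf_mem_orthantSubgrad hΓc.isClosed hU.continuous)
  have hU0 : U 0 = 0 := tendsto_nhds_unique (hlim 0 zero_mem_orthant) (by simp [payoff, hs0])
  have hU_nonneg : ∀ x ∈ orthant k, 0 ≤ U x := fun x hx =>
    ge_of_tendsto' (hlim x hx) fun j => hIR _ x hx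
  refine ⟨φ, hφ, q, fun x => dotp (q x) x - U x, fun x _ => (hqG x).1.1, fun x hx y hy => ?_,
    fun x hx => by simpa using hU_nonneg x hx, by simp [hU0], hM.sub hU.continuous.measurable,
    fun x hx c hc => ?_⟩
  · have h := (hqG y).1.2 x hx
    rw [orthantProj_of_mem hy, dotp_sub_right] at h
    linarith
  · obtain ⟨ε, hε, rfl⟩ : ∃ ε > 0, c = dotp (q x) x - U x + 2 * ε :=
      ⟨(c - (dotp (q x) x - U x)) / 2, by simp only at hc; linarith, by ring⟩
    have hdot : ∀ᶠ j in atTop, dotp (qN (φ j) x) x < dotp (q x) x + ε :=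
      eventually_lt_of_forall_tendsto_subseq hΓc (fun j => hq _ x hx)
        (continuous_id.dotp continuous_const) fun g ψ hψ hg =>
          ((hqG x).2 g (by rw [orthantProj_of_mem hx]; exact hsubseq hx hψ hg)).trans_lt
            (lt_add_of_pos_right _ hε)
    have hpay : ∀ᶠ j in atTop, U x - ε < payoff (qN (φ j)) (sN (φ j)) x :=
      (hlim x hx).eventually (lt_mem_nhds (sub_lt_self _ hε))
    filter_upwards [hdot, hpay] with j h₁ h₂
    simp only [payoff] at h₂
    linarith

end LimitMechanism

section Revenue

variable {k : ℕ} {Γ : Set (E k)} {Ω : Type*} [MeasurableSpace Ω] {P : Measure Ω} {X : Ω → E k}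

def revenues (Γ : Set (E k)) (P : Measure Ω) (X : Ω → E k) : Set ℝ :=
  {r | ∃ q : E k → E k, ∃ s : E k → ℝ, IsAlloc Γ q ∧ IsIC q s ∧ IsIR q s ∧
    r = ∫ ω, s (X ω) ∂P}

lemma zero_mem_revenues (hΓne : Γ.Nonempty) (hΓ : Γ ⊆ orthant k) : 0 ∈ revenues Γ P X :=
  let ⟨q, hq, hIC, hIR⟩ := exists_isAlloc_isIC_isIR_zero hΓne hΓ
  ⟨q, 0, hq, hIC, hIR, by simp⟩

lemma bddAbove_revenues (hΓc : IsCompact Γ) (hXpos : ∀ ω, X ω ∈ orthant k)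
    (hXint : Integrable (fun ω => ‖X ω‖) P) : BddAbove (revenues Γ P X) := by
  obtain ⟨L, hL0, hL⟩ := hΓc.isBounded.exists_pos_norm_le
  refine ⟨∫ ω, L * ‖X ω‖ ∂P, ?_⟩
  rintro _ ⟨q, s, hq, -, hIR, rfl⟩
  by_cases hi : Integrable (fun ω => s (X ω)) P
  · exact integral_mono hi (hXint.const_mul L) fun ω => hIR.apply_le hq hL (hXpos ω)
  · rw [integral_undef hi]
    exact integral_nonneg fun ω => by positivity

/-- Shifting `s` by `-s 0 ≥ 0` keeps IC and IR and does not lower the revenue; a non-integrable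
`s` has the junk revenue `0`, which the trivial mechanism matches. -/
lemma exists_le_integral_of_mem_revenues [IsFiniteMeasure P] (hΓne : Γ.Nonempty)
    (hΓ : Γ ⊆ orthant k) {r : ℝ} (hr : r ∈ revenues Γ P X) :
    ∃ q : E k → E k, ∃ s : E k → ℝ, IsAlloc Γ q ∧ IsIC q s ∧ IsIR q s ∧ s 0 = 0 ∧
      Integrable (fun ω => s (X ω)) P ∧ r ≤ ∫ ω, s (X ω) ∂P := by
  obtain ⟨q, s, hq, hIC, hIR, rfl⟩ := hr
  by_cases hi : Integrable (fun ω => s (X ω)) P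
  · have hs0 : s 0 ≤ 0 := by simpa using hIR 0 zero_mem_orthant
    exact ⟨q, fun x => s x - s 0, hq, hIC.sub_const _, hIC.isIR_sub_apply_zero hq hΓ, sub_self _,
      hi.sub (integrable_const _),
      integral_mono hi (hi.sub (integrable_const _)) fun ω => by simp only; linarith⟩
  · obtain ⟨q₀, hq₀, hIC₀, hIR₀⟩ := exists_isAlloc_isIC_isIR_zero hΓne hΓ
    exact ⟨q₀, 0, hq₀, hIC₀, hIR₀, rfl, integrable_zero _ _ _, by simp [integral_undef hi]⟩

theorem exists_le_integral_of_tendsto {qN : ℕ → E k → E k} {sN : ℕ → E k → ℝ}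
    (hΓc : IsCompact Γ) (hXm : Measurable X) (hXpos : ∀ ω, X ω ∈ orthant k)
    (hXint : Integrable (fun ω => ‖X ω‖) P) (hq : ∀ n, IsAlloc Γ (qN n))
    (hIC : ∀ n, IsIC (qN n) (sN n)) (hIR : ∀ n, IsIR (qN n) (sN n)) (hs0 : ∀ n, sN n 0 = 0)
    (hint : ∀ n, Integrable (fun ω => sN n (X ω)) P) {r : ℝ}
    (hr : Tendsto (fun n => ∫ ω, sN n (X ω) ∂P) atTop (𝓝 r)) :
    ∃ q : E k → E k, ∃ s : E k → ℝ, IsAlloc Γ q ∧ IsIC q s ∧ IsIR q s ∧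
      r ≤ ∫ ω, s (X ω) ∂P := by
  obtain ⟨L, hL0, hL⟩ := hΓc.isBounded.exists_pos_norm_le
  obtain ⟨φ, hφ, q, s, hq', hIC', hIR', hs0', hs, hlim⟩ :=
    exists_limit_mechanism hΓc hq hIC hIR hs0
  have hs_abs : ∀ x ∈ orthant k, ‖s x‖ ≤ L * ‖x‖ := fun x hx => by
    rw [Real.norm_eq_abs, abs_le]
    have hs_nonneg : 0 ≤ s x := hs0' ▸ hIC'.apply_zero_le hx
    exact ⟨(neg_nonpos.2 (by positivity)).trans hs_nonneg, hIR'.apply_le hq' hL hx⟩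
  have hint' : Integrable (fun ω => s (X ω)) P := (hXint.const_mul L).mono'
    (hs.comp hXm).aestronglyMeasurable (ae_of_all _ fun ω => hs_abs _ (hXpos ω))
  exact ⟨q, s, hq', hIC', hIR', le_integral_of_tendsto_integral (fun j => hint (φ j)) hint'
    (hXint.const_mul L) (fun j => ae_of_all _ fun ω => (hIR (φ j)).apply_le (hq _) hL (hXpos ω))
    (ae_of_all _ fun ω => hIR'.apply_le hq' hL (hXpos ω)) (ae_of_all _ fun ω => hlim _ (hXpos ω))
    (hr.comp hφ.tendsto_atTop)⟩

end Revenue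

theorem stmt0_general {k : ℕ} (Γ : Set (E k)) (hΓne : Γ.Nonempty)
    (hΓc : IsCompact Γ) (hΓ : Γ ⊆ orthant k)
    {Ω : Type*} [MeasurableSpace Ω] (P : Measure Ω) [IsProbabilityMeasure P]
    (X : Ω → E k) (hXm : Measurable X) (hXpos : ∀ ω, X ω ∈ orthant k)
    (hXint : Integrable (fun ω => ‖X ω‖) P) :
    ∃ q : E k → E k, ∃ s : E k → ℝ, IsAlloc Γ q ∧ IsIC q s ∧ IsIR q s ∧
      (∫ ω, s (X ω) ∂P) =
        sSup {r : ℝ | ∃ q' : E k → E k, ∃ s' : E k → ℝ,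
          IsAlloc Γ q' ∧ IsIC q' s' ∧ IsIR q' s' ∧ r = ∫ ω, s' (X ω) ∂P} := by
  change ∃ q s, IsAlloc Γ q ∧ IsIC q s ∧ IsIR q s ∧ ∫ ω, s (X ω) ∂P = sSup (revenues Γ P X)
  have hbdd := bddAbove_revenues hΓc hXpos hXint
  obtain ⟨r, -, hr, hr_mem⟩ := exists_seq_tendsto_sSup ⟨0, zero_mem_revenues hΓne hΓ⟩ hbdd
  choose qN sN hq hIC hIR hs0 hint hle using
    fun n => exists_le_integral_of_mem_revenues hΓne hΓ (hr_mem n)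
  have hlim : Tendsto (fun n => ∫ ω, sN n (X ω) ∂P) atTop (𝓝 (sSup (revenues Γ P X))) :=
    tendsto_of_tendsto_of_tendsto_of_le_of_le hr tendsto_const_nhds hle
      fun n => le_csSup hbdd ⟨qN n, sN n, hq n, hIC n, hIR n, rfl⟩
  obtain ⟨q, s, hq', hIC', hIR', hge⟩ :=
    exists_le_integral_of_tendsto hΓc hXm hXpos hXint hq hIC hIR hs0 hint hlim
  exact ⟨q, s, hq', hIC', hIR', le_antisymm (le_csSup hbdd ⟨q, s, hq', hIC', hIR', rfl⟩) hge⟩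

/-- existence of a revenue-maximizing IC and IR mechanism. -/
theorem stmt0 {k : ℕ} (hk : 1 ≤ k) (Γ : Set (E k)) (hΓne : Γ.Nonempty)
    (hΓc : IsCompact Γ) (hΓ : Γ ⊆ orthant k)
    {Ω : Type*} [MeasurableSpace Ω] (P : Measure Ω) [IsProbabilityMeasure P]
    (X : Ω → E k) (hXm : Measurable X) (hXpos : ∀ ω, X ω ∈ orthant k)
    (hXint : Integrable (fun ω => ‖X ω‖) P) :
    ∃ q : E k → E k, ∃ s : E k → ℝ, IsAlloc Γ q ∧ IsIC q s ∧ IsIR q s ∧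
      (∫ ω, s (X ω) ∂P) =
        sSup {r : ℝ | ∃ q' : E k → E k, ∃ s' : E k → ℝ,
          IsAlloc Γ q' ∧ IsIC q' s' ∧ IsIR q' s' ∧ r = ∫ ω, s' (X ω) ∂P} :=
  stmt0_general Γ hΓne hΓc hΓ P X hXm hXpos hXint
end
end

section
/- Let μ_n = (q_n,s_n), for n = 1,2,..., and μ = (q,s) be IC, IR, and NPT Γ-mechanisms with extended buyer payoff functions b_n and b respectively. If b_n converges pointwise to b on ℝ^k and μ is seller favorable (i.e., s(x) = b′(x;x) − b(x) for all x ∈ ℝ_+^k), then limsup_{n→∞} s_n(x) ≤ s(x) for every x ∈ ℝ_+^k. -/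
open MeasureTheory Filter

noncomputable section

open Set Topology

/-! Incentive compatibility makes `qₙ(x)` a subgradient of the buyer payoff `bₙ` at `x` with
`sₙ(x) = qₙ(x)·x − bₙ(x)`, so `sₙ(x) ≤ (bₙ(x + δx) − bₙ(x))/δ − bₙ(x)` for every `δ > 0`.
Letting `n → ∞` bounds `limsup sₙ(x)` by `(b(x + δx) − b(x))/δ − b(x)`. As `b` is convex on all
of `ℝ^k`, these difference quotients decrease and are bounded below, so they converge to
`b′(x;x)` as `δ ↓ 0`, and the bound becomes `b′(x;x) − b(x) = s(x)`. -/

section ConvexRay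

variable {V : Type*} [AddCommGroup V] [Module ℝ V] {f : V → ℝ}

theorem ConvexOn.comp_ray (hf : ConvexOn ℝ univ f) (x v : V) :
    ConvexOn ℝ univ fun t : ℝ => f (x + t • v) := by
  have h : (fun t : ℝ => f (x + t • v)) = f ∘ AffineMap.lineMap x (x + v) := by
    funext t
    simp [AffineMap.lineMap_apply, add_comm]
  rw [h]
  exact hf.comp_affineMap _

theorem ConvexOn.ray_secant_mono (hf : ConvexOn ℝ univ f) (x v : V) {δ₁ δ₂ : ℝ}
    (h₁ : δ₁ ≠ 0) (h₂ : δ₂ ≠ 0) (h : δ₁ ≤ δ₂) :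
    (f (x + δ₁ • v) - f x) / δ₁ ≤ (f (x + δ₂ • v) - f x) / δ₂ := by
  simpa using (hf.comp_ray x v).secant_mono (a := 0) trivial trivial trivial h₁ h₂ h

end ConvexRay

theorem ConvexOn.tendsto_dirDeriv {k : ℕ} {f : E k → ℝ} (hf : ConvexOn ℝ univ f) (x v : E k) :
    Tendsto (fun δ : ℝ => (f (x + δ • v) - f x) / δ) (𝓝[>] 0) (𝓝 (dirDeriv f x v)) := by
  have hmono : MonotoneOn (fun δ : ℝ => (f (x + δ • v) - f x) / δ) (Ioi 0) :=
    fun δ₁ h₁ δ₂ h₂ h => hf.ray_secant_mono x v (ne_of_gt h₁) (ne_of_gt h₂) h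
  have hbdd : BddBelow ((fun δ : ℝ => (f (x + δ • v) - f x) / δ) '' Ioi 0) := by
    refine ⟨(f (x + (-1 : ℝ) • v) - f x) / (-1), ?_⟩
    rintro _ ⟨δ, hδ, rfl⟩
    exact hf.ray_secant_mono x v (by norm_num) (ne_of_gt hδ) (by linarith [mem_Ioi.mp hδ])
  have h := hmono.tendsto_nhdsGT hbdd
  rwa [← h.limUnder_eq] at h

theorem ConvexOn.le_dirDeriv {k : ℕ} {f : E k → ℝ} (hf : ConvexOn ℝ univ f) {x v : E k} {a : ℝ}
    (ha : ∀ δ > 0, a ≤ (f (x + δ • v) - f x) / δ) : a ≤ dirDeriv f x v :=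
  ge_of_tendsto (hf.tendsto_dirDeriv x v) (eventually_nhdsWithin_of_forall ha)

section Mechanism

variable {k : ℕ}

theorem dotp_add (g u v : E k) : dotp g (u + v) = dotp g u + dotp g v := by
  simp [dotp, mul_add, Finset.sum_add_distrib]

theorem dotp_smul (g : E k) (c : ℝ) (u : E k) : dotp g (c • u) = c * dotp g u := by
  simp [dotp, Finset.mul_sum, mul_left_comm]

theorem continuous_dotp_left (x : E k) : Continuous fun g : E k => dotp g x := by
  unfold dotp; fun_prop

variable {Γ : Set (E k)} {q : E k → E k} {s : E k → ℝ}

theorem IsAlloc.bddAbove_payoffs (hΓc : IsCompact Γ) (hq : IsAlloc Γ q) (hNPT : IsNPT s)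
    (x : E k) : BddAbove ((fun z => dotp (q z) x - s z) '' orthant k) := by
  obtain ⟨M, hM⟩ := (hΓc.image (continuous_dotp_left x)).bddAbove
  refine ⟨M, ?_⟩
  rintro _ ⟨z, hz, rfl⟩
  have hqz : dotp (q z) x ≤ M := hM (mem_image_of_mem _ (hq z hz))
  linarith [hNPT z hz]

theorem IsAlloc.le_extPayoff (hΓc : IsCompact Γ) (hq : IsAlloc Γ q) (hNPT : IsNPT s)
    {z : E k} (hz : z ∈ orthant k) (x : E k) : dotp (q z) x - s z ≤ extPayoff q s x :=
  le_csSup (hq.bddAbove_payoffs hΓc hNPT x) ⟨z, hz, rfl⟩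

theorem IsIC.extPayoff_eq (hIC : IsIC q s) {x : E k} (hx : x ∈ orthant k) :
    extPayoff q s x = dotp (q x) x - s x := by
  refine IsGreatest.csSup_eq ⟨⟨x, hx, rfl⟩, ?_⟩
  rintro _ ⟨z, hz, rfl⟩
  exact hIC x hx z hz

theorem IsAlloc.convexOn_extPayoff (hΓc : IsCompact Γ) (hq : IsAlloc Γ q) (hNPT : IsNPT s) :
    ConvexOn ℝ univ (extPayoff q s) := by
  refine ⟨convex_univ, fun u _ v _ a c ha hc hac => ?_⟩
  refine csSup_le (Nonempty.image _ ⟨0, fun i => le_rfl⟩) ?_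
  rintro _ ⟨z, hz, rfl⟩
  have hu := mul_le_mul_of_nonneg_left (hq.le_extPayoff hΓc hNPT hz u) ha
  have hv := mul_le_mul_of_nonneg_left (hq.le_extPayoff hΓc hNPT hz v) hc
  have hs : s z = a * s z + c * s z := by rw [← add_mul, hac, one_mul]
  simp only [dotp_add, dotp_smul, smul_eq_mul]
  linarith

theorem IsIC.payment_le_slope (hΓc : IsCompact Γ) (hq : IsAlloc Γ q) (hIC : IsIC q s)
    (hNPT : IsNPT s) {x : E k} (hx : x ∈ orthant k) {δ : ℝ} (hδ : 0 < δ) :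
    s x ≤ (extPayoff q s (x + δ • x) - extPayoff q s x) / δ - extPayoff q s x := by
  have hsub := hq.le_extPayoff hΓc hNPT hx (x + δ • x)
  rw [dotp_add, dotp_smul] at hsub
  have hslope : dotp (q x) x ≤ (extPayoff q s (x + δ • x) - extPayoff q s x) / δ := by
    rw [le_div_iff₀ hδ, hIC.extPayoff_eq hx]
    linarith
  rw [hIC.extPayoff_eq hx] at hslope ⊢
  linarith

theorem limsup_payment_le_slope {qn : ℕ → E k → E k} {sn : ℕ → E k → ℝ} {b : E k → ℝ}
    (hΓc : IsCompact Γ) (hqn : ∀ n, IsAlloc Γ (qn n)) (hICn : ∀ n, IsIC (qn n) (sn n))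
    (hNPTn : ∀ n, IsNPT (sn n))
    (hconv : ∀ y, Tendsto (fun n => extPayoff (qn n) (sn n) y) atTop (𝓝 (b y)))
    {x : E k} (hx : x ∈ orthant k) {δ : ℝ} (hδ : 0 < δ) :
    limsup (fun n => sn n x) atTop ≤ (b (x + δ • x) - b x) / δ - b x := by
  have hslope : Tendsto (fun n => (extPayoff (qn n) (sn n) (x + δ • x)
      - extPayoff (qn n) (sn n) x) / δ - extPayoff (qn n) (sn n) x) atTop
      (𝓝 ((b (x + δ • x) - b x) / δ - b x)) :=
    (((hconv _).sub (hconv x)).div_const δ).sub (hconv x)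
  calc limsup (fun n => sn n x) atTop
      ≤ limsup (fun n => (extPayoff (qn n) (sn n) (x + δ • x)
          - extPayoff (qn n) (sn n) x) / δ - extPayoff (qn n) (sn n) x) atTop :=
        limsup_le_limsup
          (Eventually.of_forall fun n => (hICn n).payment_le_slope hΓc (hqn n) (hNPTn n) hx hδ)
          (isCoboundedUnder_le_of_le atTop fun n => hNPTn n x hx) hslope.isBoundedUnder_le
    _ = (b (x + δ • x) - b x) / δ - b x := hslope.limsup_eq

end Mechanism

theorem stmt6_general {k : ℕ} (Γ : Set (E k))
    (hΓc : IsCompact Γ)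
    (qn : ℕ → E k → E k) (sn : ℕ → E k → ℝ)
    (hqn : ∀ n, IsAlloc Γ (qn n)) (hICn : ∀ n, IsIC (qn n) (sn n))
    (hNPTn : ∀ n, IsNPT (sn n))
    (q : E k → E k) (s : E k → ℝ)
    (hq : IsAlloc Γ q) (hNPT : IsNPT s)
    (hconv : ∀ x : E k,
      Tendsto (fun n => extPayoff (qn n) (sn n) x) atTop (nhds (extPayoff q s x)))
    (hSF : SellerFavorable q s) :
    ∀ x ∈ orthant k, limsup (fun n => sn n x) atTop ≤ s x := by
  intro x hx
  have hb := hq.convexOn_extPayoff hΓc hNPT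
  have hderiv : limsup (fun n => sn n x) atTop + extPayoff q s x
      ≤ dirDeriv (extPayoff q s) x x :=
    hb.le_dirDeriv fun δ hδ => by
      linarith [limsup_payment_le_slope hΓc hqn hICn hNPTn hconv hx hδ]
  linarith [hSF x hx]

/-- if the buyer payoff functions of IC, IR, NPT mechanisms `μₙ`
converge pointwise to the buyer payoff function of a seller-favorable IC, IR, NPT
mechanism `μ`, then `limsup sₙ(x) ≤ s(x)` for every `x ∈ ℝ₊^k`. -/
theorem stmt6 {k : ℕ} (hk : 1 ≤ k) (Γ : Set (E k)) (hΓne : Γ.Nonempty)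
    (hΓc : IsCompact Γ) (hΓ : Γ ⊆ orthant k)
    (qn : ℕ → E k → E k) (sn : ℕ → E k → ℝ)
    (hqn : ∀ n, IsAlloc Γ (qn n)) (hICn : ∀ n, IsIC (qn n) (sn n))
    (hIRn : ∀ n, IsIR (qn n) (sn n)) (hNPTn : ∀ n, IsNPT (sn n))
    (q : E k → E k) (s : E k → ℝ)
    (hq : IsAlloc Γ q) (hIC : IsIC q s) (hIR : IsIR q s) (hNPT : IsNPT s)
    (hconv : ∀ x : E k,
      Tendsto (fun n => extPayoff (qn n) (sn n) x) atTop (nhds (extPayoff q s x)))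
    (hSF : SellerFavorable q s) :
    ∀ x ∈ orthant k, limsup (fun n => sn n x) atTop ≤ s x :=
  stmt6_general Γ hΓc qn sn hqn hICn hNPTn q s hq hNPT hconv hSF
end
end

section
/- Let b : ℝ^k → ℝ be a convex function. Then the seller-favorable payment function s*(x) := b′(x;x) − b(x) is upper semicontinuous on ℝ^k, where b′(x;y) := lim_{δ→0+} (b(x+δy) − b(x))/δ is the one-sided directional derivative of b at x in direction y. -/
open MeasureTheory Filter

noncomputable section

/-! For convex `b` the difference quotient `(b (x + t • y) - b x) / t` is monotone in `t ≠ 0`,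
so `b′(x;y)` is its infimum over `t > 0` (bounded below by the quotient at `t = -1`). Hence
`x ↦ b′(x;x)` is an infimum of continuous functions, so upper semicontinuous. -/

open Set Topology

section Slope

variable {V : Type*} [AddCommGroup V] [Module ℝ V] {f : V → ℝ}

theorem ConvexOn.monotoneOn_slope_line (hf : ConvexOn ℝ univ f) (x y : V) :
    MonotoneOn (fun t : ℝ => (f (x + t • y) - f x) / t) {t | t ≠ 0} := by
  have hline : ConvexOn ℝ univ fun t : ℝ => f (x + t • y) := by
    simpa [AffineMap.lineMap_apply, Function.comp_def, add_comm]
      using hf.comp_affineMap (AffineMap.lineMap x (x + y))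
  intro s hs t ht hst
  simpa using hline.secant_mono (a := 0) trivial trivial trivial hs ht hst

theorem ConvexOn.bddBelow_slope_line (hf : ConvexOn ℝ univ f) (x y : V) :
    BddBelow (range fun t : Ioi (0 : ℝ) => (f (x + (t : ℝ) • y) - f x) / t) := by
  refine ⟨(f (x + (-1 : ℝ) • y) - f x) / (-1), ?_⟩
  rintro _ ⟨⟨t, ht : 0 < t⟩, rfl⟩
  exact hf.monotoneOn_slope_line x y (by norm_num) ht.ne' (by linarith)

theorem ConvexOn.tendsto_slope_line (hf : ConvexOn ℝ univ f) (x y : V) :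
    Tendsto (fun t : ℝ => (f (x + t • y) - f x) / t) (𝓝[>] 0)
      (𝓝 (⨅ t : Ioi (0 : ℝ), (f (x + (t : ℝ) • y) - f x) / t)) := by
  have hmono := (hf.monotoneOn_slope_line x y).mono fun t (ht : 0 < t) => ht.ne'
  have hlim := hmono.tendsto_nhdsGT (by
    simpa only [image_eq_range] using hf.bddBelow_slope_line x y)
  rwa [image_eq_range] at hlim

end Slope

theorem dirDeriv_eq_iInf {k : ℕ} {b : E k → ℝ} (hb : ConvexOn ℝ univ b) (x y : E k) :
    dirDeriv b x y = ⨅ t : Ioi (0 : ℝ), (b (x + (t : ℝ) • y) - b x) / t :=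
  (hb.tendsto_slope_line x y).limUnder_eq

theorem stmt19_general {k : ℕ}
    (b : E k → ℝ) (hconv : ConvexOn ℝ Set.univ b) :
    UpperSemicontinuous (fun x => dirDeriv b x x - b x) := by
  have hb : Continuous b := hconv.locallyLipschitz.continuous
  have hderiv : UpperSemicontinuous fun x => dirDeriv b x x := by
    simp only [dirDeriv_eq_iInf hconv]
    exact upperSemicontinuous_ciInf (fun x => hconv.bddBelow_slope_line x x)
      fun t => Continuous.upperSemicontinuous (by fun_prop)
  simp only [sub_eq_add_neg]
  exact hderiv.add hb.neg.upperSemicontinuous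

/-- for a convex `b : ℝ^k → ℝ`, the seller-favorable payment
function `x ↦ b′(x;x) − b(x)` is upper semicontinuous. -/
theorem stmt19 {k : ℕ} (hk : 1 ≤ k)
    (b : E k → ℝ) (hconv : ConvexOn ℝ Set.univ b) :
    UpperSemicontinuous (fun x => dirDeriv b x x - b x) :=
  stmt19_general b hconv
end
end
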